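/- In linear regression transfer learning with Gaussian data, the regret equals R(S,T) = ‖Σ_{T,X}^{1/2}(w_T − w_S)‖₂² + [μ_{T,Y} − μ_{S,Y} − Σ_{S,YX}Σ_{S,X}^{-1}(μ_{T,X} − μ_{S,X})]². -/

import Mathlib

/-!
The residual of the predictor `x ↦ w ⬝ᵥ x + b` is `c ⬝ᵥ v - b` with `c = (-w, 1)`, so under
`N(μ, Σ)` its mean square is the variance `c ⬝ᵥ Σ c` plus the squared mean `(c ⬝ᵥ μ - b)²`.
The target coefficients solve the normal equations `Σ_{T,X} w_T = Σ_{T,XY}` and make the mean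
term vanish; subtracting the two risks, the quadratic terms complete to the `Σ_{T,X}`-norm of
`w_T - w_S`, and what is left of the source mean term is the bias of `f*_S` at the target mean.
-/

open MeasureTheory ProbabilityTheory Matrix
open scoped NNReal

/-- The positive semidefinite square root (removed from Mathlib; restored with its old definition). -/
noncomputable def Matrix.PosSemidef.sqrt {n : Type*} [Fintype n] [DecidableEq n]
    {A : Matrix n n ℝ} (hA : A.PosSemidef) : Matrix n n ℝ :=
  (hA.1.eigenvectorUnitary : Matrix n n ℝ) * diagonal ((↑) ∘ Real.sqrt ∘ hA.1.eigenvalues) *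
    (star hA.1.eigenvectorUnitary : Matrix n n ℝ)

/-- The multivariate Gaussian measure `N(μ, S)` on `ℝ^n`. -/
noncomputable def multiGaussian {n : ℕ} (μ : Fin n → ℝ) (S : Matrix (Fin n) (Fin n) ℝ)
    (hS : S.PosSemidef) : Measure (Fin n → ℝ) :=
  (Measure.pi fun _ : Fin n => gaussianReal 0 1).map fun z => μ + hS.sqrt.mulVec z

lemma Matrix.IsSymm.mulVec_dotProduct {R n : Type*} [CommSemiring R] [Fintype n]
    {A : Matrix n n R} (hA : A.IsSymm) (v w : n → R) : A *ᵥ v ⬝ᵥ w = v ⬝ᵥ A *ᵥ w := by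
  rw [dotProduct_mulVec, ← vecMul_transpose, hA.eq]

lemma integral_sub_const_sq_eq_variance_add {Ω : Type*} [MeasurableSpace Ω] {P : Measure Ω}
    [IsProbabilityMeasure P] {X : Ω → ℝ} (hX : MemLp X 2 P) (b : ℝ) :
    ∫ ω, (X ω - b) ^ 2 ∂P = Var[X; P] + (P[X] - b) ^ 2 := by
  rw [← variance_sub_const hX.aestronglyMeasurable b,
    variance_eq_sub (X := fun ω ↦ X ω - b) (hX.sub (memLp_const b)),
    integral_sub (hX.integrable one_le_two) (integrable_const b)]
  simp

lemma Fin.snoc_dotProduct {R : Type*} [Mul R] [AddCommMonoid R] {d : ℕ} (x : Fin d → R)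
    (a : R) (v : Fin (d + 1) → R) :
    (Fin.snoc x a : Fin (d + 1) → R) ⬝ᵥ v = x ⬝ᵥ (fun i ↦ v i.castSucc) + a * v (Fin.last d) := by
  simp [dotProduct, Fin.sum_univ_castSucc]

lemma Matrix.IsSymm.snoc_neg_one_dotProduct_mulVec {R : Type*} [CommRing R] {d : ℕ}
    {S : Matrix (Fin (d + 1)) (Fin (d + 1)) R} (hS : S.IsSymm) (w : Fin d → R) :
    (Fin.snoc (-w) 1 : Fin (d + 1) → R) ⬝ᵥ S *ᵥ Fin.snoc (-w) 1 =
      w ⬝ᵥ S.submatrix Fin.castSucc Fin.castSucc *ᵥ w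
        - 2 * (w ⬝ᵥ fun i ↦ S i.castSucc (Fin.last d)) + S (Fin.last d) (Fin.last d) := by
  have hrow (i) : (S *ᵥ Fin.snoc (-w) 1) i =
      -((fun j ↦ S i j.castSucc) ⬝ᵥ w) + S i (Fin.last d) := by
    rw [mulVec, dotProduct_comm, Fin.snoc_dotProduct]
    simp [dotProduct_comm]
  have hinit : (fun i ↦ (S *ᵥ Fin.snoc (-w) 1) i.castSucc) =
      -(S.submatrix Fin.castSucc Fin.castSucc *ᵥ w) + fun i ↦ S i.castSucc (Fin.last d) := by
    ext i
    rw [hrow]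
    rfl
  have hlast :
      (fun j ↦ S (Fin.last d) j.castSucc) ⬝ᵥ w = w ⬝ᵥ fun i ↦ S i.castSucc (Fin.last d) := by
    rw [dotProduct_comm]
    simp only [hS.apply]
  rw [Fin.snoc_dotProduct, hinit, hrow, hlast]
  simp only [dotProduct_add, dotProduct_neg, neg_dotProduct, neg_neg]
  ring

namespace Matrix.PosSemidef

variable {n : Type*} [Fintype n] [DecidableEq n] {A : Matrix n n ℝ} (hA : A.PosSemidef)

lemma sqrt_isSymm : hA.sqrt.IsSymm := by
  rw [← isHermitian_iff_isSymm, IsHermitian, Matrix.PosSemidef.sqrt, conjTranspose_mul,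
    conjTranspose_mul, diagonal_conjTranspose]
  simp [Matrix.star_eq_conjTranspose, mul_assoc]

lemma sqrt_mul_self : hA.sqrt * hA.sqrt = A := by
  have hD : diagonal ((↑) ∘ Real.sqrt ∘ hA.1.eigenvalues) *
      diagonal ((↑) ∘ Real.sqrt ∘ hA.1.eigenvalues) =
      diagonal (RCLike.ofReal ∘ hA.1.eigenvalues : n → ℝ) := by
    rw [diagonal_mul_diagonal]
    congr 1
    funext i
    simp [Real.mul_self_sqrt (hA.eigenvalues_nonneg i)]
  conv_rhs => rw [hA.1.spectral_theorem, Unitary.conjStarAlgAut_apply, ← hD]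
  simp only [Matrix.PosSemidef.sqrt, mul_assoc]
  rw [← mul_assoc (star (hA.1.eigenvectorUnitary : Matrix n n ℝ)),
    Unitary.coe_star_mul_self, one_mul]

lemma sqrt_mulVec_dotProduct_sqrt_mulVec (x : n → ℝ) :
    hA.sqrt *ᵥ x ⬝ᵥ hA.sqrt *ᵥ x = x ⬝ᵥ A *ᵥ x := by
  rw [hA.sqrt_isSymm.mulVec_dotProduct, mulVec_mulVec, hA.sqrt_mul_self]

end Matrix.PosSemidef

section StandardGaussianPi

variable {ι : Type*} [Fintype ι]

lemma memLp_dotProduct_pi_gaussianReal (u : ι → ℝ) :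
    MemLp (fun z ↦ u ⬝ᵥ z) 2 (Measure.pi fun _ : ι ↦ gaussianReal 0 1) := by
  have := memLp_finsetSum' Finset.univ fun i _ ↦
    ((memLp_id_gaussianReal' 2 (by norm_num)).comp_measurePreserving
      (measurePreserving_eval (fun _ : ι ↦ gaussianReal 0 1) i)).const_mul (u i)
  convert this using 1
  ext z; simp [dotProduct]

lemma integral_dotProduct_pi_gaussianReal (u : ι → ℝ) :
    ∫ z, u ⬝ᵥ z ∂(Measure.pi fun _ : ι ↦ gaussianReal 0 1) = 0 := by
  simp only [dotProduct]
  rw [integral_finsetSum _ fun i _ ↦ (integrable_eval IsGaussian.integrable_id).const_mul _]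
  simp [integral_const_mul, integral_eval, integral_id_gaussianReal]

lemma variance_dotProduct_pi_gaussianReal (u : ι → ℝ) :
    Var[fun z ↦ u ⬝ᵥ z; Measure.pi fun _ : ι ↦ gaussianReal 0 1] = u ⬝ᵥ u := by
  have h := variance_sum_pi (μ := fun _ : ι ↦ gaussianReal 0 1) (X := fun i x ↦ u i * x)
    fun i ↦ (memLp_id_gaussianReal 2).const_mul (u i)
  convert h using 2
  · ext z; simp [dotProduct]
  · simp [dotProduct, variance_const_mul _ (fun x : ℝ ↦ x), variance_fun_id_gaussianReal, sq]

end StandardGaussianPi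

section MultiGaussian

variable {n : ℕ} (μ : Fin n → ℝ) {S : Matrix (Fin n) (Fin n) ℝ} (hS : S.PosSemidef)
  (c : Fin n → ℝ)

lemma measurable_add_sqrt_mulVec : Measurable fun z ↦ μ + hS.sqrt *ᵥ z := by
  fun_prop

instance isProbabilityMeasure_multiGaussian : IsProbabilityMeasure (multiGaussian μ S hS) :=
  Measure.isProbabilityMeasure_map (measurable_add_sqrt_mulVec μ hS).aemeasurable

lemma dotProduct_add_sqrt_mulVec (z : Fin n → ℝ) :
    c ⬝ᵥ (μ + hS.sqrt *ᵥ z) = c ⬝ᵥ μ + hS.sqrt *ᵥ c ⬝ᵥ z := by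
  rw [dotProduct_add, hS.sqrt_isSymm.mulVec_dotProduct]

lemma memLp_dotProduct_multiGaussian : MemLp (fun v ↦ c ⬝ᵥ v) 2 (multiGaussian μ S hS) := by
  rw [multiGaussian,
    memLp_map_measure_iff (by fun_prop) (measurable_add_sqrt_mulVec μ hS).aemeasurable]
  convert (memLp_const (c ⬝ᵥ μ)).add (memLp_dotProduct_pi_gaussianReal (hS.sqrt *ᵥ c)) using 1
  ext z
  exact dotProduct_add_sqrt_mulVec μ hS c z

lemma integral_dotProduct_multiGaussian : ∫ v, c ⬝ᵥ v ∂(multiGaussian μ S hS) = c ⬝ᵥ μ := by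
  rw [multiGaussian, integral_map (measurable_add_sqrt_mulVec μ hS).aemeasurable (by fun_prop)]
  simp only [dotProduct_add_sqrt_mulVec]
  rw [integral_add (integrable_const _)
    ((memLp_dotProduct_pi_gaussianReal _).integrable one_le_two),
    integral_dotProduct_pi_gaussianReal]
  simp

lemma variance_dotProduct_multiGaussian :
    Var[fun v ↦ c ⬝ᵥ v; multiGaussian μ S hS] = c ⬝ᵥ S *ᵥ c := by
  rw [multiGaussian, variance_map (by fun_prop) (measurable_add_sqrt_mulVec μ hS).aemeasurable]
  simp only [Function.comp_def, dotProduct_add_sqrt_mulVec]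
  rw [variance_const_add (memLp_dotProduct_pi_gaussianReal _).aestronglyMeasurable,
    variance_dotProduct_pi_gaussianReal, hS.sqrt_mulVec_dotProduct_sqrt_mulVec]

end MultiGaussian

lemma integral_sq_sub_linear_multiGaussian {d : ℕ} (μ : Fin (d + 1) → ℝ)
    {S : Matrix (Fin (d + 1)) (Fin (d + 1)) ℝ} (hS : S.PosSemidef) (w : Fin d → ℝ) (b : ℝ) :
    ∫ v, (v (Fin.last d) - (w ⬝ᵥ (fun i ↦ v i.castSucc) + b)) ^ 2 ∂(multiGaussian μ S hS) =
      w ⬝ᵥ S.submatrix Fin.castSucc Fin.castSucc *ᵥ w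
        - 2 * (w ⬝ᵥ fun i ↦ S i.castSucc (Fin.last d)) + S (Fin.last d) (Fin.last d)
        + (μ (Fin.last d) - w ⬝ᵥ (fun i ↦ μ i.castSucc) - b) ^ 2 := by
  have hresidual (v : Fin (d + 1) → ℝ) : v (Fin.last d) - (w ⬝ᵥ (fun i ↦ v i.castSucc) + b) =
      (Fin.snoc (-w) 1 : Fin (d + 1) → ℝ) ⬝ᵥ v - b := by
    rw [Fin.snoc_dotProduct, neg_dotProduct]
    ring
  simp only [hresidual]
  rw [integral_sub_const_sq_eq_variance_add (memLp_dotProduct_multiGaussian μ hS _),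
    variance_dotProduct_multiGaussian, integral_dotProduct_multiGaussian,
    (isHermitian_iff_isSymm.mp hS.1).snoc_neg_one_dotProduct_mulVec, Fin.snoc_dotProduct,
    neg_dotProduct]
  ring

theorem regret_eq_gaussian_general {d : ℕ}
    (μT : Fin (d + 1) → ℝ) (ST : Matrix (Fin (d + 1)) (Fin (d + 1)) ℝ) (hST : ST.PosSemidef)
    (μSX μTX : Fin d → ℝ)
    (hμTX : μTX = fun i => μT i.castSucc)
    (μSY μTY : ℝ) (hμTY : μTY = μT (Fin.last d))
    (SSX : Matrix (Fin d) (Fin d) ℝ) (hSSX : SSX.PosDef)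
    (STX : Matrix (Fin d) (Fin d) ℝ) (hSTXdef : STX = ST.submatrix Fin.castSucc Fin.castSucc)
    (hSTX : STX.PosDef)
    (SSXY : Fin d → ℝ)
    (STXY : Fin d → ℝ) (hSTXYdef : STXY = fun i => ST i.castSucc (Fin.last d))
    (wS wT : Fin d → ℝ) (hwS : wS = SSX⁻¹.mulVec SSXY) (hwT : wT = STX⁻¹.mulVec STXY)
    (bS bT : ℝ) (hbS : bS = μSY - SSXY ⬝ᵥ SSX⁻¹.mulVec μSX)
    (hbT : bT = μTY - STXY ⬝ᵥ STX⁻¹.mulVec μTX) :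
    (∫ v, (v (Fin.last d) - (wS ⬝ᵥ (fun i => v i.castSucc) + bS)) ^ 2
        ∂(multiGaussian μT ST hST)) -
      (∫ v, (v (Fin.last d) - (wT ⬝ᵥ (fun i => v i.castSucc) + bT)) ^ 2
        ∂(multiGaussian μT ST hST)) =
    (hSTX.posSemidef.sqrt.mulVec (wT - wS)) ⬝ᵥ (hSTX.posSemidef.sqrt.mulVec (wT - wS)) +
      (μTY - μSY - SSXY ⬝ᵥ SSX⁻¹.mulVec (μTX - μSX)) ^ 2 := by
  have hSTXsymm : STX.IsSymm := isHermitian_iff_isSymm.mp hSTX.1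
  have hSSXsymm : SSX.IsSymm := isHermitian_iff_isSymm.mp hSSX.1
  have hnormal : STX *ᵥ wT = STXY := by
    rw [hwT, mulVec_mulVec, mul_nonsing_inv _ (isUnit_iff_ne_zero.2 hSTX.det_pos.ne'),
      one_mulVec]
  have hinterceptT : μTY - wT ⬝ᵥ μTX - bT = 0 := by
    rw [hbT, hwT, hSTXsymm.inv.mulVec_dotProduct]
    ring
  have hinterceptS : μTY - wS ⬝ᵥ μTX - bS = μTY - μSY - SSXY ⬝ᵥ SSX⁻¹ *ᵥ (μTX - μSX) := by
    rw [hbS, hwS, hSSXsymm.inv.mulVec_dotProduct, mulVec_sub, dotProduct_sub]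
    ring
  have hcross : wS ⬝ᵥ STX *ᵥ wT = wT ⬝ᵥ STX *ᵥ wS := by
    rw [dotProduct_comm, hSTXsymm.mulVec_dotProduct]
  rw [integral_sq_sub_linear_multiGaussian, integral_sq_sub_linear_multiGaussian, ← hSTXdef,
    ← hSTXYdef, ← hμTX, ← hμTY, hinterceptT, hinterceptS,
    hSTX.posSemidef.sqrt_mulVec_dotProduct_sqrt_mulVec, ← hnormal]
  simp only [mulVec_sub, dotProduct_sub, sub_dotProduct, hcross]
  ring

/-- In linear-regression transfer learning with Gaussian data, the regret equals
`‖Σ_{T,X}^{1/2}(w_T − w_S)‖₂² + [μ_{T,Y} − μ_{S,Y} − Σ_{S,YX}Σ_{S,X}^{-1}(μ_{T,X} − μ_{S,X})]²`. -/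
theorem regret_eq_gaussian {d : ℕ}
    (μS μT : Fin (d + 1) → ℝ) (ST : Matrix (Fin (d + 1)) (Fin (d + 1)) ℝ) (hST : ST.PosSemidef)
    (μSX μTX : Fin d → ℝ) (hμSX : μSX = fun i => μS i.castSucc)
    (hμTX : μTX = fun i => μT i.castSucc)
    (μSY μTY : ℝ) (hμSY : μSY = μS (Fin.last d)) (hμTY : μTY = μT (Fin.last d))
    (SSX : Matrix (Fin d) (Fin d) ℝ) (hSSX : SSX.PosDef)
    (STX : Matrix (Fin d) (Fin d) ℝ) (hSTXdef : STX = ST.submatrix Fin.castSucc Fin.castSucc)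
    (hSTX : STX.PosDef)
    (SSXY : Fin d → ℝ)
    (STXY : Fin d → ℝ) (hSTXYdef : STXY = fun i => ST i.castSucc (Fin.last d))
    (wS wT : Fin d → ℝ) (hwS : wS = SSX⁻¹.mulVec SSXY) (hwT : wT = STX⁻¹.mulVec STXY)
    (bS bT : ℝ) (hbS : bS = μSY - SSXY ⬝ᵥ SSX⁻¹.mulVec μSX)
    (hbT : bT = μTY - STXY ⬝ᵥ STX⁻¹.mulVec μTX) :
    (∫ v, (v (Fin.last d) - (wS ⬝ᵥ (fun i => v i.castSucc) + bS)) ^ 2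
        ∂(multiGaussian μT ST hST)) -
      (∫ v, (v (Fin.last d) - (wT ⬝ᵥ (fun i => v i.castSucc) + bT)) ^ 2
        ∂(multiGaussian μT ST hST)) =
    (hSTX.posSemidef.sqrt.mulVec (wT - wS)) ⬝ᵥ (hSTX.posSemidef.sqrt.mulVec (wT - wS)) +
      (μTY - μSY - SSXY ⬝ᵥ SSX⁻¹.mulVec (μTX - μSX)) ^ 2 :=
  regret_eq_gaussian_general μT ST hST μSX μTX hμTX μSY μTY hμTY SSX hSSX STX hSTXdef hSTX SSXY STXY
    hSTXYdef wS wT hwS hwT bS bT hbS hbT
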